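/- Let X, Y, Z be indecomposable objects of the bounded derived category of an Ext-finite abelian category with Serre duality such that d•(X,Z) = 0. Then for all nonzero f ∈ Hom(X,Y) and g ∈ Hom(Y,Z), the composition g∘f is nonzero. In particular, d•(X,Z) = 0 implies Hom(X,Z) ≠ 0. -/

import Mathlib

open CategoryTheory CategoryTheory.Limits CategoryTheory.Pretriangulated

namespace Paper

/-! ### A construction of the bounded derived category of an abelian category. -/

/-- An object of the homotopy category of an abelian category is (cochain-)bounded. -/
def IsBddObj {A : Type*} [Category A] [Abelian A]
    (X : HomotopyCategory A (ComplexShape.up ℤ)) : Prop :=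
  ∃ a b : ℤ, ∀ i : ℤ, (i < a ∨ b < i) → IsZero (X.as.X i)

/-- The bounded homotopy category `K^b(A)`. -/
abbrev KbCat (A : Type*) [Category A] [Abelian A] :=
  ObjectProperty.FullSubcategory (IsBddObj (A := A))

/-- Quasi-isomorphisms in the bounded homotopy category. -/
def qisW (A : Type*) [Category A] [Abelian A] : MorphismProperty (KbCat A) :=
  fun X Y f => HomotopyCategory.quasiIso A (ComplexShape.up ℤ) (X := X.obj) (Y := Y.obj) f.hom

/-- The bounded derived category `D^b(A)` of an abelian category `A`, constructed as the
localization of the bounded homotopy category at the quasi-isomorphisms. -/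
def Db (A : Type*) [Category A] [Abelian A] : Type _ := (qisW A).Localization

noncomputable instance (A : Type*) [Category A] [Abelian A] : Category (Db A) := by
  dsimp [Db]; infer_instance

/-- `D^b` of a category with explicitly given category and abelian structures. -/
def DbOf (H : Type*) (c : Category H) (a : Abelian H) : Type _ := @Db H c a

noncomputable instance (H : Type*) (c : Category H) (a : Abelian H) :
    Category (DbOf H c a) := by
  dsimp [DbOf]; infer_instance


variable {C : Type*} [Category C]

/-- Serre duality data on a `k`-linear category: a Serre functor `S` together with
isomorphisms `Hom(A,B) ≅ Hom(B, S A)*`, natural in both variables. -/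
structure SerreFunctorData (k : Type*) [Field k] (C : Type*) [Category C] [Preadditive C]
    [Linear k C] where
  S : C ≌ C
  equiv : ∀ A B : C, (A ⟶ B) ≃ₗ[k] Module.Dual k (B ⟶ S.functor.obj A)
  nat_right : ∀ (A B B' : C) (g : B ⟶ B') (u : A ⟶ B) (v : B' ⟶ S.functor.obj A),
    equiv A B' (u ≫ g) v = equiv A B u (g ≫ v)
  nat_left : ∀ (A A' B : C) (f : A' ⟶ A) (u : A ⟶ B) (v : B ⟶ S.functor.obj A'),
    equiv A' B (f ≫ u) v = equiv A B u (v ≫ S.functor.map f)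

/-- The `n`-th power (n ∈ ℤ) of an auto-equivalence, on objects. -/
def tpow (τ : C ≌ C) : ℤ → C → C
  | Int.ofNat n, X => (fun Y => τ.functor.obj Y)^[n] X
  | Int.negSucc n, X => (fun Y => τ.inverse.obj Y)^[n + 1] X

section Paths
variable [Limits.HasZeroMorphisms C] [HasBinaryBiproducts C]

/-- One step of a path: a nonzero morphism between indecomposables. -/
def PathStep (A B : C) : Prop :=
  Indecomposable A ∧ Indecomposable B ∧ ∃ f : A ⟶ B, f ≠ 0

/-- There is a path (a chain of nonzero morphisms between indecomposables) from `X` to `Y`. -/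
def HasPath (X Y : C) : Prop := Relation.ReflTransGen (PathStep (C := C)) X Y

/-- The right light cone distance `d•(X,Y) = inf { n : ℤ | there is a path from X to τ^{-n} Y }`,
as an extended real number (so that the infimum of the empty set is `⊤` and `-∞` can occur). -/
noncomputable def lcd (τ : C ≌ C) (X Y : C) : EReal :=
  sInf {e : EReal | ∃ n : ℤ, e = ((n : ℝ) : EReal) ∧ HasPath X (tpow τ (-n) Y)}

/-- The round trip distance. -/
noncomputable def rtd (τ : C ≌ C) (X Y : C) : EReal := lcd τ X Y + lcd τ Y X

/-- Right light cone distance from a set to an object. -/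
noncomputable def lcdFrom (τ : C ≌ C) (T : Set C) (X : C) : EReal :=
  sInf {e : EReal | ∃ t ∈ T, e = lcd τ t X}

/-- Right light cone distance from an object to a set. -/
noncomputable def lcdTo (τ : C ≌ C) (X : C) (T : Set C) : EReal :=
  sInf {e : EReal | ∃ t ∈ T, e = lcd τ X t}

/-- The round trip distance between a set and an object. -/
noncomputable def rtdSet (τ : C ≌ C) (T : Set C) (X : C) : EReal :=
  lcdFrom τ T X + lcdTo τ X T

/-- An object is directing if there is no nontrivial path from it to itself, i.e. no path
from `X` to `X` passing in order through objects `Y`, `Z` admitting a nonzero radical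
(= non-invertible) morphism `Y ⟶ Z`. -/
def Directing (X : C) : Prop :=
  ¬ ∃ Y Z : C, HasPath X Y ∧ HasPath Y Z ∧ HasPath Z X ∧
      Indecomposable Y ∧ Indecomposable Z ∧ ∃ f : Y ⟶ Z, f ≠ 0 ∧ ¬ IsIso f

end Paths

end Paper

/-! If `f ≫ g = 0` with `f, g ≠ 0`, complete `f` to a distinguished triangle
`X ⟶ Y ⟶ Q ⟶ X⟦1⟧`. Then `g` factors through `Q`, and even through an indecomposable retract `U`
of `Q` (Hom-finiteness makes splitting off summands terminate). The composite `U ⟶ Q ⟶ X⟦1⟧` is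
nonzero, for otherwise `U` would be a retract of the indecomposable `Y` and `f` would vanish. As
`X⟦1⟧ ≅ S (τ⁻¹ X)`, Serre duality gives a nonzero `τ⁻¹ X ⟶ U`, hence a path `X ⟶ τ U ⟶ τ Z`,
which forces `d•(X,Z) ≤ -1`. So under `d•(X,Z) = 0` no such composite vanishes, and composing along
a path from `X` to `Z` (the infimum `0` is attained) produces a nonzero morphism `X ⟶ Z`. -/

namespace CategoryTheory.Equivalence

variable {C D : Type*} [Category C] [Category D] [Preadditive C] [Preadditive D] (e : C ≌ D)

lemma functor_map_ne_zero {A B : C} {u : A ⟶ B} (hu : u ≠ 0) : e.functor.map u ≠ 0 :=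
  fun h => hu (e.functor.map_injective (by rw [h, Functor.map_zero]))

lemma exists_ne_zero_to_functor_obj {X : D} {U : C} {u : e.inverse.obj X ⟶ U} (hu : u ≠ 0) :
    ∃ v : X ⟶ e.functor.obj U, v ≠ 0 :=
  ⟨e.counitInv.app X ≫ e.functor.map u, by simpa using e.functor_map_ne_zero hu⟩

variable [HasBinaryBiproducts C] [HasBinaryBiproducts D]

lemma indecomposable_functor_obj {A : C} (hA : Indecomposable A) :
    Indecomposable (e.functor.obj A) := by
  have : HasBinaryProducts C := hasBinaryProducts_of_hasBinaryBiproducts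
  have : PreservesBinaryBiproducts e.inverse :=
    preservesBinaryBiproducts_of_preservesBinaryProducts _
  refine ⟨fun hz => hA.1 ((e.inverse.map_isZero hz).of_iso (e.unitIso.app A)), fun P Q i => ?_⟩
  have iA : A ≅ e.inverse.obj P ⊞ e.inverse.obj Q :=
    e.unitIso.app A ≪≫ e.inverse.mapIso i ≪≫ e.inverse.mapBiprod P Q
  exact (hA.2 _ _ iA).imp (fun h => (e.functor.map_isZero h).of_iso (e.counitIso.app P).symm)
    (fun h => (e.functor.map_isZero h).of_iso (e.counitIso.app Q).symm)

lemma pathStep_functor_obj {A B : C} (h : Paper.PathStep A B) :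
    Paper.PathStep (e.functor.obj A) (e.functor.obj B) :=
  let ⟨hA, hB, u, hu⟩ := h
  ⟨e.indecomposable_functor_obj hA, e.indecomposable_functor_obj hB, e.functor.map u,
    e.functor_map_ne_zero hu⟩

lemma hasPath_functor_obj {A B : C} (h : Paper.HasPath A B) :
    Paper.HasPath (e.functor.obj A) (e.functor.obj B) :=
  Relation.ReflTransGen.lift e.functor.obj (fun _ _ => e.pathStep_functor_obj) _ _ h

end CategoryTheory.Equivalence

namespace Paper

section HomFinite

variable {C : Type*} [Category C] [Preadditive C]
  {k : Type*} [Field k] [Linear k C] [∀ X Y : C, FiniteDimensional k (X ⟶ Y)]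

lemma finrank_end_pos {A : C} (hA : ¬ IsZero A) : 0 < Module.finrank k (A ⟶ A) :=
  Module.finrank_pos_iff_exists_ne_zero.mpr ⟨𝟙 A, fun h => hA ((IsZero.iff_id_eq_zero A).mpr h)⟩

variable [HasBinaryBiproducts C]

lemma finrank_end_add_finrank_end_le {W A B : C} (e : W ≅ A ⊞ B) :
    Module.finrank k (A ⟶ A) + Module.finrank k (B ⟶ B) ≤ Module.finrank k (W ⟶ W) := by
  let Φ : ((A ⟶ A) × (B ⟶ B)) →ₗ[k] (W ⟶ W) :=
    { toFun := fun ab => e.hom ≫ biprod.map ab.1 ab.2 ≫ e.inv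
      map_add' := fun _ _ => by
        simp only [biprod.map_eq, Prod.fst_add, Prod.snd_add, Preadditive.add_comp,
          Preadditive.comp_add]
        abel
      map_smul' := fun _ _ => by
        simp only [biprod.map_eq, Prod.smul_fst, Prod.smul_snd, Linear.smul_comp,
          Linear.comp_smul, RingHom.id_apply, ← smul_add] }
  have hΦ : Function.Injective Φ := fun x y hxy => by
    have h : biprod.map x.1 x.2 = biprod.map y.1 y.2 := by
      simpa [Φ] using congrArg (fun m => e.inv ≫ m ≫ e.hom) hxy
    exact Prod.ext (by simpa using congrArg (fun m => biprod.inl ≫ m ≫ biprod.fst) h)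
      (by simpa using congrArg (fun m => biprod.inr ≫ m ≫ biprod.snd) h)
  simpa [Module.finrank_prod] using LinearMap.finrank_le_finrank_of_injective hΦ

end HomFinite

section Retract

variable {C : Type*} [Category C] [Preadditive C] [HasBinaryBiproducts C]

lemma comp_eq_add_of_iso_biprod {Y W Z A B : C} (e : W ≅ A ⊞ B) (g : Y ⟶ W) (h : W ⟶ Z) :
    g ≫ h = g ≫ e.hom ≫ biprod.fst ≫ biprod.inl ≫ e.inv ≫ h +
      g ≫ e.hom ≫ biprod.snd ≫ biprod.inr ≫ e.inv ≫ h := by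
  calc g ≫ h = g ≫ e.hom ≫ 𝟙 (A ⊞ B) ≫ e.inv ≫ h := by simp
    _ = _ := by
      rw [← biprod.total]
      simp only [Preadditive.add_comp, Preadditive.comp_add, Category.assoc]

theorem exists_indecomposable_retract_comp_ne_zero (k : Type*) [Field k] [Linear k C]
    [∀ X Y : C, FiniteDimensional k (X ⟶ Y)] {Y W Z : C} (g : Y ⟶ W) (h : W ⟶ Z)
    (hgh : g ≫ h ≠ 0) :
    ∃ (U : C) (r : Retract U W), Indecomposable U ∧ g ≫ r.r ≫ r.i ≫ h ≠ 0 := by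
  induction hn : Module.finrank k (W ⟶ W) using Nat.strong_induction_on generalizing W with
  | _ n ih =>
    by_cases hW : Indecomposable W
    · exact ⟨W, Retract.refl W, hW, by simpa using hgh⟩
    have hW0 : ¬ IsZero W := fun hz => hgh (by rw [hz.eq_of_src h 0, comp_zero])
    obtain ⟨A, B, e, hA, hB⟩ : ∃ (A B : C) (_ : W ≅ A ⊞ B), ¬ IsZero A ∧ ¬ IsZero B := by
      simpa [Indecomposable, hW0] using hW
    have descend (P : C) (r : Retract P W) (hP : Module.finrank k (P ⟶ P) < n)
        (hne : g ≫ r.r ≫ r.i ≫ h ≠ 0) :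
        ∃ (U : C) (r : Retract U W), Indecomposable U ∧ g ≫ r.r ≫ r.i ≫ h ≠ 0 := by
      obtain ⟨U, r', hU, hne'⟩ := ih _ hP (g ≫ r.r) (r.i ≫ h) (by simpa using hne) rfl
      exact ⟨U, r'.trans r, hU, by simpa using hne'⟩
    have hsum := finrank_end_add_finrank_end_le (k := k) e
    have hApos := finrank_end_pos (k := k) hA
    have hBpos := finrank_end_pos (k := k) hB
    by_cases hfst : g ≫ e.hom ≫ biprod.fst ≫ biprod.inl ≫ e.inv ≫ h = 0
    · refine descend B ⟨biprod.inr ≫ e.inv, e.hom ≫ biprod.snd, by simp⟩ (by omega) ?_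
      simpa [comp_eq_add_of_iso_biprod e g h, hfst] using hgh
    · exact descend A ⟨biprod.inl ≫ e.inv, e.hom ≫ biprod.fst, by simp⟩ (by omega)
        (by simpa using hfst)

end Retract

lemma SerreFunctorData.exists_ne_zero_of_ne_zero {k C : Type*} [Field k] [Category C]
    [Preadditive C] [Linear k C] (S : SerreFunctorData k C) {A B : C}
    {v : B ⟶ S.S.functor.obj A} (hv : v ≠ 0) : ∃ u : A ⟶ B, u ≠ 0 := by
  obtain ⟨φ, hφ⟩ := Module.Projective.exists_dual_ne_zero k hv
  refine ⟨(S.equiv A B).symm φ, fun hu => hφ ?_⟩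
  rw [← (S.equiv A B).apply_symm_apply φ, hu, map_zero, LinearMap.zero_apply]

section LightCone

variable {C : Type*} [Category C] [HasZeroMorphisms C] [HasBinaryBiproducts C] {τ : C ≌ C}
  {X Y : C}

lemma lcd_le_of_hasPath {n : ℤ} (h : HasPath X (tpow τ (-n) Y)) : lcd τ X Y ≤ (n : ℝ) :=
  sInf_le ⟨n, rfl, h⟩

lemma hasPath_tpow_of_lcd_eq {n : ℤ} (h : lcd τ X Y = (n : ℝ)) :
    HasPath X (tpow τ (-n) Y) := by
  have hlt : lcd τ X Y < ((n + 1 : ℤ) : ℝ) := by rw [h]; exact_mod_cast Int.lt_succ n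
  obtain ⟨_, ⟨m, rfl, hm⟩, hlt⟩ := sInf_lt_iff.mp hlt
  have hle : ((n : ℝ) : EReal) ≤ (m : ℝ) := h ▸ lcd_le_of_hasPath hm
  have hmn : m = n := by
    have h₁ : (m : ℝ) < (n + 1 : ℤ) := EReal.coe_lt_coe_iff.mp hlt
    have h₂ : (n : ℝ) ≤ m := EReal.coe_le_coe_iff.mp hle
    norm_cast at h₁ h₂
    omega
  exact hmn ▸ hm

end LightCone

section Pretriangulated

variable {C : Type*} [Category C] [Preadditive C] [HasZeroObject C] [HasShift C ℤ]
  [∀ n : ℤ, (shiftFunctor C n).Additive] [Pretriangulated C]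

lemma _root_.CategoryTheory.Retract.isIso_i_of_indecomposable {U Y : C} (r : Retract U Y)
    (hY : Indecomposable Y) (hU : ¬ IsZero U) : IsIso r.i := by
  obtain ⟨V, _, _, hT⟩ := distinguished_cocone_triangle r.i
  obtain ⟨e, -, -⟩ := exists_iso_binaryBiproduct_of_distTriang _ hT
    (Triangle.mor₃_eq_zero_of_mono₁ _ hT (inferInstanceAs (Mono r.i)))
  exact (Triangle.isZero₃_iff_isIso₁ _ hT).mp ((hY.2 U V e).resolve_left hU)

variable {k : Type*} [Field k] [Linear k C] [∀ X Y : C, FiniteDimensional k (X ⟶ Y)]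
  {X Y Z : C}

lemma hasPath_functor_obj_of_comp_eq_zero (S : SerreFunctorData k C) (τ : C ≌ C)
    (hS : S.S.functor ≅ τ.functor ⋙ shiftFunctor C (1 : ℤ)) (hX : Indecomposable X)
    (hY : Indecomposable Y) (hZ : Indecomposable Z) {f : X ⟶ Y} {g : Y ⟶ Z} (hf : f ≠ 0)
    (hg : g ≠ 0) (hfg : f ≫ g = 0) : HasPath X (τ.functor.obj Z) := by
  obtain ⟨Q, v, w, hT⟩ := distinguished_cocone_triangle f
  obtain ⟨h, rfl⟩ : ∃ h : Q ⟶ Z, g = v ≫ h := Triangle.yoneda_exact₂ _ hT g hfg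
  have hfv : f ≫ v = 0 := comp_distTriang_mor_zero₁₂ _ hT
  obtain ⟨U, r, hU, hne⟩ := exists_indecomposable_retract_comp_ne_zero k v h hg
  have hih : r.i ≫ h ≠ 0 := fun h0 => hne (by simp [h0])
  have hiw : r.i ≫ w ≠ 0 := by
    intro hw
    obtain ⟨j, hj⟩ : ∃ j : U ⟶ Y, r.i = j ≫ v := Triangle.coyoneda_exact₃ _ hT r.i hw
    let r' : Retract U Y := ⟨j, v ≫ r.r, by rw [← Category.assoc, ← hj, r.retract]⟩
    have := r'.isIso_i_of_indecomposable hY hU.1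
    apply hf
    calc f = f ≫ r'.r ≫ r'.i := by simp [IsIso.eq_inv_of_hom_inv_id r'.retract]
      _ = 0 := by simp [r', reassoc_of% hfv]
  let θ : X⟦(1 : ℤ)⟧ ≅ S.S.functor.obj (τ.inverse.obj X) :=
    (shiftFunctor C (1 : ℤ)).mapIso (τ.counitIso.app X).symm ≪≫ (hS.app _).symm
  obtain ⟨u, hu⟩ := S.exists_ne_zero_of_ne_zero (v := r.i ≫ w ≫ θ.hom)
    (by simpa [← Category.assoc] using hiw)
  obtain ⟨u', hu'⟩ := τ.exists_ne_zero_to_functor_obj hu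
  have hτU := τ.indecomposable_functor_obj hU
  exact .head ⟨hX, hτU, u', hu'⟩
    (.single ⟨hτU, τ.indecomposable_functor_obj hZ, _, τ.functor_map_ne_zero hih⟩)

lemma exists_ne_zero_of_hasPath (S : SerreFunctorData k C) (τ : C ≌ C)
    (hS : S.S.functor ≅ τ.functor ⋙ shiftFunctor C (1 : ℤ)) (hX : Indecomposable X)
    (hXZ : ¬ HasPath X (τ.functor.obj Z)) {W : C} (hWZ : HasPath W Z) {c : X ⟶ W} (hc : c ≠ 0) :
    ∃ h : X ⟶ Z, h ≠ 0 := by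
  induction hWZ using Relation.ReflTransGen.head_induction_on with
  | refl => exact ⟨c, hc⟩
  | head step hW'Z ih =>
    obtain ⟨hW, hW', m, hm⟩ := step
    refine ih (c := c ≫ m) fun hcm => hXZ ?_
    exact (hasPath_functor_obj_of_comp_eq_zero S τ hS hX hW hW' hc hm hcm).trans
      (τ.hasPath_functor_obj hW'Z)

end Pretriangulated

/-- if `d•(X,Z) = 0` then every composition of nonzero morphisms
`X ⟶ Y ⟶ Z` is nonzero; in particular `Hom(X,Z) ≠ 0`. -/
theorem composition_nonzero_of_lcd_zero
    (k : Type*) [Field k] [IsAlgClosed k]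
    (A : Type*) [Category A] [Abelian A] [Linear k A]
    {C : Type*} [Category C] [Preadditive C] [Linear k C] [HasZeroObject C]
    [HasShift C ℤ] [∀ n : ℤ, (shiftFunctor C n).Additive] [Pretriangulated C]
    [HasBinaryBiproducts C]
    -- `C` is the bounded derived category of the abelian category `A`
    (hdb : Nonempty (C ≌ Db A))
    -- Ext-finiteness of `A`, expressed as Hom-finiteness of `D^b(A)`
    (hfin : ∀ X Y : C, FiniteDimensional k (X ⟶ Y))
    -- Serre duality, and the Auslander–Reiten translate `τ` with `S ≅ τ ∘ [1]`
    (S : SerreFunctorData k C) (τ : C ≌ C)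
    (hτ : Nonempty (S.S.functor ≅ τ.functor ⋙ shiftFunctor C (1 : ℤ)))
    (X Y Z : C) (hX : Indecomposable X) (hY : Indecomposable Y) (hZ : Indecomposable Z)
    (h0 : lcd τ X Z = (0 : EReal)) :
    (∀ (f : X ⟶ Y) (g : Y ⟶ Z), f ≠ 0 → g ≠ 0 → f ≫ g ≠ 0) ∧
    (∃ h : X ⟶ Z, h ≠ 0) := by
  obtain ⟨hS⟩ := hτ
  have hXZ : HasPath X Z := hasPath_tpow_of_lcd_eq (n := 0) (by simpa using h0)
  have hXτZ : ¬ HasPath X (τ.functor.obj Z) := fun h =>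
    absurd (lcd_le_of_hasPath (n := -1) h) (by rw [h0]; norm_num)
  refine ⟨fun f g hf hg hfg => hXτZ ?_, ?_⟩
  · exact hasPath_functor_obj_of_comp_eq_zero S τ hS hX hY hZ hf hg hfg
  · exact exists_ne_zero_of_hasPath S τ hS hX hXτZ hXZ (c := 𝟙 X)
      fun h => hX.1 ((IsZero.iff_id_eq_zero X).mpr h)

end Paper
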